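/- Let g: (0,∞) → [0,1] be defined (for fixed d > 0, bound M ≥ d) by the conditional probability structure of L = √(Z² + d² − 2Zd cos Φ) with Φ uniform on [0,2π) and Z supported on [0,M]. If Z has a continuous density f_Z, then L has density f_L(l) = ∫_{|l−d|}^{min(l+d, M)} (2l · f_Z(z)) / (π·√((l² − (z−d)²)·((z+d)² − l²))) dz for 0 < l < M + d. -/

import Mathlib

/-!
For a fixed radius `z > 0`, the event `√(z² + d² − 2zd cos Φ) ≤ x` is `{cos Φ ≥ u}` with
`u = (z² + d² − x²)/(2zd)`, of uniform probability `arccos u / π`. Differentiating in `x` shows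
that, given `Z = z`, the law of `L` has density `2l / (π √((l² − (z−d)²)((z+d)² − l²)))` on
`(|z − d|, z + d)`. Mixing over the law of `Z` (Tonelli) and rewriting the triangle inequalities
`|z − d| < l < z + d` as `|l − d| < z < l + d` gives the density of `L` as a Lebesgue integral.
It agrees with the Bochner integral of the statement wherever it is finite, which is almost
everywhere because `L` has total mass one.
-/

open MeasureTheory ProbabilityTheory Real

/-- The uniform distribution on `[0, 2π)`. -/
noncomputable def uniformAngle : Measure ℝ :=
  (ENNReal.ofReal (2 * π))⁻¹ • volume.restrict (Set.Ico 0 (2 * π))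

open Set
open scoped ENNReal

theorem map_prod_eq_withDensity_lintegral {α β γ : Type*} [MeasurableSpace α]
    [MeasurableSpace β] [MeasurableSpace γ] {μ : Measure α} {ν : Measure β} {ρ : Measure γ}
    [SFinite μ] [SFinite ν] [SFinite ρ] {g : α × β → γ} (hg : Measurable g)
    {κ : α → γ → ℝ≥0∞} (hκ : Measurable (Function.uncurry κ))
    (h : ∀ᵐ a ∂μ, ν.map (fun b => g (a, b)) = ρ.withDensity (κ a)) :
    (μ.prod ν).map g = ρ.withDensity fun c => ∫⁻ a, κ a c ∂μ := by
  ext s hs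
  rw [Measure.map_apply hg hs, Measure.prod_apply (hg hs), withDensity_apply _ hs]
  calc ∫⁻ a, ν (Prod.mk a ⁻¹' (g ⁻¹' s)) ∂μ = ∫⁻ a, ∫⁻ c in s, κ a c ∂ρ ∂μ := by
        refine lintegral_congr_ae (h.mono fun a ha => ?_)
        dsimp only
        rw [← withDensity_apply _ hs, ← ha,
          Measure.map_apply (f := fun b => g (a, b)) (hg.comp measurable_prodMk_left) hs]
        rfl
    _ = ∫⁻ c in s, ∫⁻ a, κ a c ∂μ ∂ρ := lintegral_lintegral_swap hκ.aemeasurable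

lemma le_cos_iff_le_arccos {u φ : ℝ} (hu : u ≤ 1) (hφ₀ : 0 ≤ φ) (hφπ : φ ≤ π) :
    u ≤ cos φ ↔ φ ≤ arccos u := by
  rcases le_or_gt u (-1) with hu₁ | hu₁
  · simp only [arccos_of_le_neg_one hu₁, hφπ, iff_true]
    exact hu₁.trans (neg_one_le_cos φ)
  · conv_lhs => rw [← cos_arccos hu₁.le hu]
    exact strictAntiOn_cos.le_iff_ge ⟨arccos_nonneg u, arccos_le_pi u⟩ ⟨hφ₀, hφπ⟩

lemma setOf_le_cos_inter_Ico {u : ℝ} (hu : u ≤ 1) :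
    {φ | u ≤ cos φ} ∩ Ico 0 (2 * π) = Icc 0 (arccos u) ∪ Ico (2 * π - arccos u) (2 * π) := by
  have hα₀ := arccos_nonneg u
  have hαπ := arccos_le_pi u
  have hπ := pi_pos
  ext φ
  simp only [mem_inter_iff, mem_ofPred_eq, mem_Ico, mem_union, mem_Icc]
  by_cases hφ : 0 ≤ φ ∧ φ < 2 * π
  · rcases le_or_gt φ π with hφπ | hφπ
    · rw [le_cos_iff_le_arccos hu hφ.1 hφπ]
      grind
    · rw [← cos_two_pi_sub, le_cos_iff_le_arccos hu (by linarith) (by linarith)]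
      grind
  · grind

lemma volume_setOf_le_cos_inter_Ico (u : ℝ) :
    volume ({φ | u ≤ cos φ} ∩ Ico 0 (2 * π)) = ENNReal.ofReal (2 * arccos u) := by
  rcases lt_or_ge 1 u with hu | hu
  · have : {φ | u ≤ cos φ} = ∅ :=
      eq_empty_of_forall_notMem fun φ hφ => (hu.trans_le hφ).not_ge (cos_le_one φ)
    simp [this, arccos_of_one_le hu.le]
  have hα₀ := arccos_nonneg u
  have hαπ := arccos_le_pi u
  have hdisj : AEDisjoint volume (Icc 0 (arccos u)) (Ico (2 * π - arccos u) (2 * π)) := by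
    refine measure_mono_null (t := Icc (2 * π - arccos u) (arccos u)) ?_ ?_
    · exact fun φ ⟨h₁, h₂⟩ => ⟨h₂.1, h₁.2⟩
    · rw [volume_Icc, ENNReal.ofReal_eq_zero]
      linarith
  rw [setOf_le_cos_inter_Ico hu, measure_union₀ nullMeasurableSet_Ico hdisj, volume_Icc,
    volume_Ico, ← ENNReal.ofReal_add (by linarith) (by linarith)]
  ring_nf

lemma uniformAngle_setOf_le_cos (u : ℝ) :
    uniformAngle {φ | u ≤ cos φ} = ENNReal.ofReal (arccos u / π) := by
  rw [uniformAngle, Measure.smul_apply, smul_eq_mul, Measure.restrict_apply' measurableSet_Ico,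
    volume_setOf_le_cos_inter_Ico, ← ENNReal.ofReal_inv_of_pos (by positivity),
    ← ENNReal.ofReal_mul (by positivity)]
  congr 1
  field_simp

instance isProbabilityMeasure_uniformAngle : IsProbabilityMeasure uniformAngle := by
  refine ⟨?_⟩
  have h := uniformAngle_setOf_le_cos (-1)
  rwa [show {φ | -1 ≤ cos φ} = univ from eq_univ_of_forall neg_one_le_cos, arccos_neg_one,
    div_self pi_ne_zero, ENNReal.ofReal_one] at h

lemma uniformAngle_setOf_sqrt_le {p q x : ℝ} (hp : 0 < p) (hq : 0 < q) (hx : 0 ≤ x) :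
    uniformAngle {φ | √(p ^ 2 + q ^ 2 - 2 * p * q * cos φ) ≤ x} =
      ENNReal.ofReal (arccos ((p ^ 2 + q ^ 2 - x ^ 2) / (2 * p * q)) / π) := by
  rw [← uniformAngle_setOf_le_cos]
  congr 1
  ext φ
  rw [mem_ofPred_eq, mem_ofPred_eq, sqrt_le_left hx, div_le_iff₀ (by positivity)]
  constructor <;> intro h <;> linarith

lemma hasDerivAt_arccos_cosineLaw {p q t : ℝ} (hp : 0 < p) (hq : 0 < q)
    (ht₁ : |p - q| < t) (ht₂ : t < p + q) :
    HasDerivAt (fun s => arccos ((p ^ 2 + q ^ 2 - s ^ 2) / (2 * p * q)))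
      (2 * t / √((t ^ 2 - (p - q) ^ 2) * ((p + q) ^ 2 - t ^ 2))) t := by
  have hpq : 0 < 2 * p * q := by positivity
  obtain ⟨hlt₁, hlt₂⟩ := abs_lt.mp ht₁
  have hsq₁ : (p - q) ^ 2 < t ^ 2 := sq_lt_sq' hlt₁ hlt₂
  have hsq₂ : t ^ 2 < (p + q) ^ 2 := sq_lt_sq' (by linarith) ht₂
  have hQ : 0 < (t ^ 2 - (p - q) ^ 2) * ((p + q) ^ 2 - t ^ 2) :=
    mul_pos (by linarith) (by linarith)
  set u := (p ^ 2 + q ^ 2 - t ^ 2) / (2 * p * q)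
  have hu₁ : -1 < u := by rw [lt_div_iff₀ hpq]; nlinarith
  have hu₂ : u < 1 := by rw [div_lt_one hpq]; nlinarith
  have hsqrt : √(1 - u ^ 2) = √((t ^ 2 - (p - q) ^ 2) * ((p + q) ^ 2 - t ^ 2)) / (2 * p * q) := by
    rw [← sqrt_sq hpq.le, ← sqrt_div' _ (sq_nonneg _)]
    congr 1
    simp only [u]
    field_simp
    ring
  have hinner : HasDerivAt (fun s => (p ^ 2 + q ^ 2 - s ^ 2) / (2 * p * q))
      (-(2 * t) / (2 * p * q)) t := by
    simpa using ((hasDerivAt_pow 2 t).const_sub (p ^ 2 + q ^ 2)).div_const (2 * p * q)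
  refine ((hasDerivAt_arccos hu₁.ne' hu₂.ne).comp t hinner).congr_deriv ?_
  rw [hsqrt]
  field_simp

lemma setLIntegral_Ioc_cosineLaw {p q b : ℝ} (hp : 0 < p) (hq : 0 < q) (hb₁ : |p - q| ≤ b)
    (hb₂ : b ≤ p + q) :
    ∫⁻ t in Ioc |p - q| b,
        ENNReal.ofReal (2 * t / (π * √((t ^ 2 - (p - q) ^ 2) * ((p + q) ^ 2 - t ^ 2)))) =
      ENNReal.ofReal (arccos ((p ^ 2 + q ^ 2 - b ^ 2) / (2 * p * q)) / π) := by
  set F := fun s => arccos ((p ^ 2 + q ^ 2 - s ^ 2) / (2 * p * q)) / π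
  have hF : ContinuousOn F (Icc |p - q| b) :=
    ((continuous_arccos.comp (by fun_prop)).div_const π).continuousOn
  have hF' : ∀ t ∈ Ioo |p - q| b,
      HasDerivAt F (2 * t / (π * √((t ^ 2 - (p - q) ^ 2) * ((p + q) ^ 2 - t ^ 2)))) t := by
    intro t ht
    rw [mul_comm π, ← div_div]
    exact (hasDerivAt_arccos_cosineLaw hp hq ht.1 (ht.2.trans_le hb₂)).div_const π
  have hF'_nonneg : ∀ t ∈ Ioc |p - q| b,
      0 ≤ 2 * t / (π * √((t ^ 2 - (p - q) ^ 2) * ((p + q) ^ 2 - t ^ 2))) := fun t ht => by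
    have := (abs_nonneg _).trans_lt ht.1
    positivity
  have hint := intervalIntegral.integrableOn_deriv_of_nonneg hF hF'
    fun t ht => hF'_nonneg t (Ioo_subset_Ioc_self ht)
  have hFa : F |p - q| = 0 := by
    rw [div_eq_zero_iff, arccos_eq_zero, sq_abs, one_le_div (by positivity)]
    left
    linarith
  rw [← ofReal_integral_eq_lintegral_ofReal hint
      ((ae_restrict_iff' measurableSet_Ioc).2 (.of_forall hF'_nonneg)),
    ← intervalIntegral.integral_of_le hb₁,
    intervalIntegral.integral_eq_sub_of_hasDerivAt_of_le hb₁ hF hF'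
      ((intervalIntegrable_iff_integrableOn_Ioc_of_le hb₁).2 hint), hFa, sub_zero]

lemma arccos_cosineLaw_max_min {p q x : ℝ} (hp : 0 < p) (hq : 0 < q) (hx : 0 ≤ x) :
    arccos ((p ^ 2 + q ^ 2 - max |p - q| (min x (p + q)) ^ 2) / (2 * p * q)) =
      arccos ((p ^ 2 + q ^ 2 - x ^ 2) / (2 * p * q)) := by
  have hpq : 0 < 2 * p * q := by positivity
  rcases le_total x |p - q| with h | h
  · have hx2 : x ^ 2 ≤ (p - q) ^ 2 := by
      rw [← sq_abs (p - q)]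
      exact pow_le_pow_left₀ hx h 2
    rw [max_eq_left ((min_le_left _ _).trans h), sq_abs,
      arccos_of_one_le (by rw [one_le_div hpq]; linarith),
      arccos_of_one_le (by rw [one_le_div hpq]; linarith)]
  rcases le_total x (p + q) with h' | h'
  · rw [min_eq_left h', max_eq_right h]
  · have hx2 : (p + q) ^ 2 ≤ x ^ 2 := pow_le_pow_left₀ (by linarith) h' 2
    rw [min_eq_right h', max_eq_right (abs_sub_le_iff.2 ⟨by linarith, by linarith⟩),
      arccos_of_le_neg_one (by rw [div_le_iff₀ hpq]; linarith),
      arccos_of_le_neg_one (by rw [div_le_iff₀ hpq]; linarith)]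

noncomputable def cosineLawDensity (p q t : ℝ) : ℝ :=
  (Ioo |p - q| (p + q)).indicator
    (fun t => 2 * t / (π * √((t ^ 2 - (p - q) ^ 2) * ((p + q) ^ 2 - t ^ 2)))) t

lemma measurable_cosineLawDensity (q : ℝ) :
    Measurable fun x : ℝ × ℝ => cosineLawDensity x.1 q x.2 := by
  have hs : MeasurableSet {x : ℝ × ℝ | x.2 ∈ Ioo |x.1 - q| (x.1 + q)} :=
    (measurableSet_lt (measurable_fst.sub_const q).abs measurable_snd).inter
      (measurableSet_lt measurable_snd (measurable_fst.add_const q))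
  simp only [cosineLawDensity, indicator_apply]
  exact Measurable.ite hs (by fun_prop) measurable_const

lemma setLIntegral_Iic_cosineLawDensity {p q x : ℝ} (hp : 0 < p) (hq : 0 < q) (hx : 0 ≤ x) :
    ∫⁻ t in Iic x, ENNReal.ofReal (cosineLawDensity p q t) =
      ENNReal.ofReal (arccos ((p ^ 2 + q ^ 2 - x ^ 2) / (2 * p * q)) / π) := by
  set b := max |p - q| (min x (p + q))
  have hb : |p - q| ≤ b ∧ b ≤ p + q :=
    ⟨le_max_left _ _, max_le (abs_sub_le_iff.2 ⟨by linarith, by linarith⟩) (min_le_right _ _)⟩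
  have hset : (Ioo |p - q| (p + q) ∩ Iic x : Set ℝ) =ᵐ[volume] Ioc |p - q| b := by
    have h₁ : Ioo |p - q| b ⊆ Ioo |p - q| (p + q) ∩ Iic x := fun t ⟨h, h'⟩ => by
      simp only [b, lt_max_iff, lt_min_iff] at h'
      exact ⟨⟨h, by grind⟩, by grind⟩
    have h₂ : Ioo |p - q| (p + q) ∩ Iic x ⊆ Icc |p - q| b := fun t ⟨⟨h, h'⟩, h''⟩ =>
      ⟨h.le, le_max_of_le_right (le_min h'' h'.le)⟩
    exact (h₂.eventuallyLE.trans Ioc_ae_eq_Icc.symm.le).antisymm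
      (Ioo_ae_eq_Ioc.symm.le.trans h₁.eventuallyLE)
  have hind : (fun t => ENNReal.ofReal (cosineLawDensity p q t)) =
      (Ioo |p - q| (p + q)).indicator (ENNReal.ofReal ∘ _) :=
    (indicator_comp_of_zero ENNReal.ofReal_zero).symm
  rw [hind, lintegral_indicator measurableSet_Ioo, Measure.restrict_restrict measurableSet_Ioo,
    setLIntegral_congr hset, ← arccos_cosineLaw_max_min hp hq hx]
  exact setLIntegral_Ioc_cosineLaw hp hq hb.1 hb.2

theorem map_uniformAngle_cosineLaw {p q : ℝ} (hp : 0 < p) (hq : 0 < q) :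
    uniformAngle.map (fun φ => √(p ^ 2 + q ^ 2 - 2 * p * q * cos φ)) =
      volume.withDensity fun t => ENNReal.ofReal (cosineLawDensity p q t) := by
  refine Measure.ext_of_Iic _ _ fun x => ?_
  rw [Measure.map_apply (by fun_prop) measurableSet_Iic, withDensity_apply _ measurableSet_Iic]
  rcases lt_or_ge x 0 with hx | hx
  · have hdensity : EqOn (fun t => ENNReal.ofReal (cosineLawDensity p q t)) 0 (Iic x) :=
      fun t ht => by
        have ht' : t ∉ Ioo |p - q| (p + q) := fun h =>
          (abs_nonneg _).not_gt ((h.1.trans_le ht).trans hx)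
        simp [cosineLawDensity, indicator_of_notMem ht']
    have hempty : (fun φ => √(p ^ 2 + q ^ 2 - 2 * p * q * cos φ)) ⁻¹' Iic x = ∅ :=
      eq_empty_of_forall_notMem fun φ hφ => hx.not_ge ((sqrt_nonneg _).trans hφ)
    rw [setLIntegral_eq_zero measurableSet_Iic hdensity, hempty, measure_empty]
  · exact (uniformAngle_setOf_sqrt_le hp hq hx).trans
      (setLIntegral_Iic_cosineLawDensity hp hq hx).symm

lemma mem_Ioo_abs_sub_comm {z d l : ℝ} :
    l ∈ Ioo |z - d| (z + d) ↔ z ∈ Ioo |l - d| (l + d) := by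
  simp only [mem_Ioo, abs_sub_lt_iff]
  constructor <;> rintro ⟨⟨h₁, h₂⟩, h₃⟩ <;> exact ⟨⟨by linarith, by linarith⟩, by linarith⟩

lemma lintegral_withDensity_cosineLawDensity {f : ℝ → ℝ} {d M : ℝ} (hf : Measurable f)
    (hf₀ : ∀ z, 0 ≤ f z) (hfM : ∀ z, M < z → f z = 0) (l : ℝ) :
    ∫⁻ z, ENNReal.ofReal (cosineLawDensity z d l)
        ∂volume.withDensity (fun z => ENNReal.ofReal (f z)) =
      ∫⁻ z in Ioo |l - d| (min (l + d) M),
        ENNReal.ofReal (2 * l * f z / (π * √((l ^ 2 - (z - d) ^ 2) * ((z + d) ^ 2 - l ^ 2)))) := by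
  have hk : Measurable fun z => ENNReal.ofReal (cosineLawDensity z d l) :=
    ((measurable_cosineLawDensity d).comp (measurable_id.prodMk measurable_const)).ennreal_ofReal
  rw [lintegral_withDensity_eq_lintegral_mul _ hf.ennreal_ofReal hk,
    ← lintegral_indicator measurableSet_Ioo]
  refine lintegral_congr_ae ?_
  filter_upwards [(countable_singleton M).ae_notMem volume] with z hzM
  simp only [Pi.mul_apply, cosineLawDensity, indicator_apply, mem_Ioo_abs_sub_comm]
  simp only [mem_Ioo, lt_min_iff]
  split_ifs with h₁ h₂ h₂
  · rw [← ENNReal.ofReal_mul (hf₀ z)]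
    congr 1
    ring
  · have hz : M < z := lt_of_le_of_ne (not_lt.1 fun h => h₂ ⟨h₁.1, h₁.2, h⟩) (Ne.symm hzM)
    rw [hfM z hz, ENNReal.ofReal_zero, zero_mul]
  · exact absurd ⟨h₂.1, h₂.2.1⟩ h₁
  · rw [ENNReal.ofReal_zero, mul_zero]

lemma Ioo_abs_sub_min_eq_empty {d M l : ℝ} (hl : ¬(0 < l ∧ l < M + d)) :
    Ioo |l - d| (min (l + d) M) = ∅ := by
  refine Ioo_eq_empty fun h => hl ?_
  simp only [lt_min_iff, abs_sub_lt_iff] at h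
  constructor <;> linarith [h.1, h.2]

lemma ofReal_ite_setIntegral_eq_lintegral_cosineLawDensity {f : ℝ → ℝ} {d M l : ℝ}
    (hf : Measurable f) (hf₀ : ∀ z, 0 ≤ f z) (hfM : ∀ z, M < z → f z = 0)
    (hl : ∫⁻ z, ENNReal.ofReal (cosineLawDensity z d l)
      ∂volume.withDensity (fun z => ENNReal.ofReal (f z)) ≠ ∞) :
    ENNReal.ofReal (if 0 < l ∧ l < M + d then
        ∫ z in Ioo |l - d| (min (l + d) M),
          2 * l * f z / (π * √((l ^ 2 - (z - d) ^ 2) * ((z + d) ^ 2 - l ^ 2)))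
      else 0) =
      ∫⁻ z, ENNReal.ofReal (cosineLawDensity z d l)
        ∂volume.withDensity (fun z => ENNReal.ofReal (f z)) := by
  rw [lintegral_withDensity_cosineLawDensity hf hf₀ hfM] at hl ⊢
  split_ifs with hlM
  · rw [integral_eq_lintegral_of_nonneg_ae ?_ (by fun_prop : Measurable _).aestronglyMeasurable,
      ENNReal.ofReal_toReal hl]
    refine (ae_restrict_iff' measurableSet_Ioo).2 (.of_forall fun z _ => ?_)
    have := hf₀ z
    have := hlM.1
    positivity
  · rw [Ioo_abs_sub_min_eq_empty hlM, Measure.restrict_empty, lintegral_zero_measure,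
      ENNReal.ofReal_zero]

lemma ae_pos_withDensity_ofReal {f : ℝ → ℝ} (hf : Measurable f) (hf_neg : ∀ z < 0, f z = 0) :
    ∀ᵐ z ∂volume.withDensity (fun z => ENNReal.ofReal (f z)), 0 < z := by
  rw [ae_withDensity_iff hf.ennreal_ofReal]
  filter_upwards [(countable_singleton 0).ae_notMem volume] with z hz₀ hfz
  refine lt_of_le_of_ne (not_lt.1 fun hz => hfz ?_) (Ne.symm hz₀)
  rw [hf_neg z hz, ENNReal.ofReal_zero]

theorem density_of_cosine_law_displacement_general
    {Ω : Type*} [MeasureSpace Ω] [IsProbabilityMeasure (ℙ : Measure Ω)]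
    (Z Φ : Ω → ℝ) (hZmeas : Measurable Z) (hΦmeas : Measurable Φ)
    (hindep : IndepFun Z Φ ℙ)
    (hΦu : Measure.map Φ ℙ = uniformAngle)
    (d M : ℝ) (hd : 0 < d)
    (fZ : ℝ → ℝ) (hfZcont : Continuous fZ) (hfZnonneg : ∀ z, 0 ≤ fZ z)
    (hfZsupp : ∀ z, z < 0 ∨ M < z → fZ z = 0)
    (hZlaw : Measure.map Z ℙ = volume.withDensity (fun z => ENNReal.ofReal (fZ z)))
    (L : Ω → ℝ)
    (hL : L = fun ω => Real.sqrt ((Z ω) ^ 2 + d ^ 2 - 2 * Z ω * d * Real.cos (Φ ω))) :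
    Measure.map L ℙ = volume.withDensity (fun l => ENNReal.ofReal
      (if 0 < l ∧ l < M + d then
        ∫ z in Set.Ioo |l - d| (min (l + d) M),
          2 * l * fZ z /
            (π * Real.sqrt ((l ^ 2 - (z - d) ^ 2) * ((z + d) ^ 2 - l ^ 2)))
      else 0)) := by
  set μZ := volume.withDensity fun z => ENNReal.ofReal (fZ z)
  have hg : Measurable fun x : ℝ × ℝ => √(x.1 ^ 2 + d ^ 2 - 2 * x.1 * d * cos x.2) := by fun_prop
  have hk : Measurable (Function.uncurry fun z l => ENNReal.ofReal (cosineLawDensity z d l)) :=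
    (measurable_cosineLawDensity d).ennreal_ofReal
  have hprod : Measure.map (fun ω => (Z ω, Φ ω)) ℙ = μZ.prod uniformAngle := by
    rw [← hZlaw, ← hΦu]
    exact hindep.map_prod_eq_prod_map_map hZmeas.aemeasurable hΦmeas.aemeasurable
  have hZpos : ∀ᵐ z ∂μZ, 0 < z :=
    ae_pos_withDensity_ofReal hfZcont.measurable fun z hz => hfZsupp z (.inl hz)
  have hmix : Measure.map L ℙ =
      volume.withDensity fun l => ∫⁻ z, ENNReal.ofReal (cosineLawDensity z d l) ∂μZ := by
    rw [← map_prod_eq_withDensity_lintegral hg hk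
        (hZpos.mono fun z hz => map_uniformAngle_cosineLaw hz hd),
      ← hprod, Measure.map_map hg (hZmeas.prodMk hΦmeas), hL]
    rfl
  have hfin : ∀ᵐ l, ∫⁻ z, ENNReal.ofReal (cosineLawDensity z d l) ∂μZ < ∞ := by
    refine ae_lt_top' hk.lintegral_prod_left.aemeasurable ?_
    rw [← setLIntegral_univ, ← withDensity_apply _ MeasurableSet.univ, ← hmix]
    exact measure_ne_top _ _
  rw [hmix]
  exact withDensity_congr_ae <| hfin.mono fun l hl =>
    (ofReal_ite_setIntegral_eq_lintegral_cosineLawDensity hfZcont.measurable hfZnonneg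
      (fun z hz => hfZsupp z (.inr hz)) hl.ne).symm

/-- Density of the displacement `L = √(Z² + d² − 2Zd·cos Φ)`, where `Z` has a
continuous density `f_Z` supported in `[0, M]` and `Φ ~ U[0,2π)` is independent
of `Z`: `f_L(l) = ∫_{|l−d|}^{min(l+d,M)} 2l·f_Z(z)/(π·√((l²−(z−d)²)((z+d)²−l²))) dz`
for `0 < l < M + d` (and `0` elsewhere). -/
theorem density_of_cosine_law_displacement
    {Ω : Type*} [MeasureSpace Ω] [IsProbabilityMeasure (ℙ : Measure Ω)]
    (Z Φ : Ω → ℝ) (hZmeas : Measurable Z) (hΦmeas : Measurable Φ)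
    (hindep : IndepFun Z Φ ℙ)
    (hΦu : Measure.map Φ ℙ = uniformAngle)
    (d M : ℝ) (hd : 0 < d) (hM : d ≤ M)
    (fZ : ℝ → ℝ) (hfZcont : Continuous fZ) (hfZnonneg : ∀ z, 0 ≤ fZ z)
    (hfZsupp : ∀ z, z < 0 ∨ M < z → fZ z = 0)
    (hZlaw : Measure.map Z ℙ = volume.withDensity (fun z => ENNReal.ofReal (fZ z)))
    (L : Ω → ℝ)
    (hL : L = fun ω => Real.sqrt ((Z ω) ^ 2 + d ^ 2 - 2 * Z ω * d * Real.cos (Φ ω))) :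
    Measure.map L ℙ = volume.withDensity (fun l => ENNReal.ofReal
      (if 0 < l ∧ l < M + d then
        ∫ z in Set.Ioo |l - d| (min (l + d) M),
          2 * l * fZ z /
            (π * Real.sqrt ((l ^ 2 - (z - d) ^ 2) * ((z + d) ^ 2 - l ^ 2)))
      else 0)) :=
  density_of_cosine_law_displacement_general Z Φ hZmeas hΦmeas hindep hΦu d M hd fZ hfZcont
    hfZnonneg hfZsupp hZlaw L hL
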